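/- Assume ζ(c) < 0 for all c ∈ [0,1). Then the map c ↦ x̄₀(c) is strictly decreasing on [0,1), and the map c ↦ γ(c) is strictly decreasing and continuously differentiable on [0,1). -/

import Mathlib

/-!
Write `N(x) = x - ψ(x)/ψ'(x)` for the Newton map of `ψ`: the defining equation of `γ(c)` says
exactly `N(γ(c)) = x̄₀(c)`. Differentiating under the integral sign, `ψ`, `ψ'` and `ψ''` are
positive integrals of the same shape, so `N' = ψψ''/ψ'² > 0` and `N` is a `C¹` diffeomorphism
onto its image; hence `γ = N⁻¹ ∘ x̄₀` inherits strict decrease and `C¹` regularity from `x̄₀`.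
Finally `x̄₀'(c)` has the sign of `Φ(c) + Φ'(c)(1 - c)`, which is negative because the tangent
of the strictly convex `Φ` at `c` stays below `Φ(1) = 0`.
-/

open MeasureTheory Real Set Filter

/-- The (positive multiple of the) strictly increasing fundamental solution `ψ_λ` of the
Ornstein–Uhlenbeck equation `(1/2)σ² f'' + θ(μ - x) f' = λ f`, written as the integral
`ψ(x) = ∫₀^∞ t^(λ/θ - 1) exp(-t²/2 + a t (x - μ)) dt` with `a = √(2θ)/σ`. -/
noncomputable def OUpsi (lam th mu sig : ℝ) (x : ℝ) : ℝ :=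
  ∫ t in Set.Ioi (0:ℝ),
    t ^ (lam / th - 1) * Real.exp (-t ^ 2 / 2 + Real.sqrt (2 * th) / sig * t * (x - mu))

/-- `ζ(c) = (λ+θ)(1-c) - λΦ(c)`. -/
noncomputable def zetafun (lam th : ℝ) (Phi : ℝ → ℝ) (c : ℝ) : ℝ :=
  (lam + th) * (1 - c) - lam * Phi c

/-- `x̄₀(c) = θμΦ(c)/ζ(c)`. -/
noncomputable def xbar0fun (lam th mu : ℝ) (Phi : ℝ → ℝ) (c : ℝ) : ℝ :=
  th * mu * Phi c / zetafun lam th Phi c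

open scoped Topology

noncomputable def gaussMoment (q z : ℝ) : ℝ :=
  ∫ t in Ioi (0 : ℝ), t ^ q * exp (-t ^ 2 / 2 + z * t)

lemma continuousOn_gaussMoment_integrand (q z : ℝ) :
    ContinuousOn (fun t : ℝ => t ^ q * exp (-t ^ 2 / 2 + z * t)) (Ioi 0) :=
  (continuousOn_id.rpow_const fun t ht => Or.inl (ne_of_gt ht)).mul (by fun_prop)

section gaussMoment

variable {q : ℝ}

lemma integrableOn_gaussMoment_integrand (hq : -1 < q) (z : ℝ) :
    IntegrableOn (fun t : ℝ => t ^ q * exp (-t ^ 2 / 2 + z * t)) (Ioi 0) := by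
  -- `-t²/2 + z t ≤ z² - t²/4`
  refine Integrable.mono'
    ((integrableOn_rpow_mul_exp_neg_mul_sq (by norm_num : (0 : ℝ) < 4⁻¹) hq).const_mul
      (exp (z ^ 2)))
    ((continuousOn_gaussMoment_integrand q z).aestronglyMeasurable measurableSet_Ioi) ?_
  filter_upwards [ae_restrict_mem measurableSet_Ioi] with t (ht : 0 < t)
  rw [norm_of_nonneg (by positivity), mul_left_comm, ← exp_add]
  exact mul_le_mul_of_nonneg_left (exp_le_exp.2 (by nlinarith [sq_nonneg (t / 2 - z)]))
    (by positivity)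

lemma gaussMoment_pos (hq : -1 < q) (z : ℝ) : 0 < gaussMoment q z := by
  have hpos : ∀ t ∈ Ioi (0 : ℝ), 0 < t ^ q * exp (-t ^ 2 / 2 + z * t) :=
    fun t (ht : 0 < t) => by positivity
  rw [gaussMoment, setIntegral_pos_iff_support_of_nonneg_ae
    ((ae_restrict_iff' measurableSet_Ioi).2 (.of_forall fun t ht => (hpos t ht).le))
    (integrableOn_gaussMoment_integrand hq z)]
  refine lt_of_lt_of_le ?_ (measure_mono fun t ht => ⟨(hpos t ht).ne', ht⟩)
  simp

lemma hasDerivAt_gaussMoment (hq : -1 < q) (z : ℝ) :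
    HasDerivAt (gaussMoment q) (gaussMoment (q + 1) z) z := by
  have hq' : -1 < q + 1 := by linarith
  refine (hasDerivAt_integral_of_dominated_loc_of_deriv_le
    (F' := fun w t => t ^ (q + 1) * exp (-t ^ 2 / 2 + w * t)) (Metric.ball_mem_nhds z one_pos)
    (.of_forall fun w => (continuousOn_gaussMoment_integrand q w).aestronglyMeasurable
      measurableSet_Ioi)
    (integrableOn_gaussMoment_integrand hq z)
    ((continuousOn_gaussMoment_integrand (q + 1) z).aestronglyMeasurable measurableSet_Ioi)
    ?_ (integrableOn_gaussMoment_integrand hq' (|z| + 1)) ?_).2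
  · filter_upwards [ae_restrict_mem measurableSet_Ioi] with t (ht : 0 < t) w hw
    have hwz : w ≤ |z| + 1 := by
      have := (abs_sub_lt_iff.1 (Metric.mem_ball.1 hw)).1
      linarith [le_abs_self z]
    rw [norm_of_nonneg (by positivity)]
    gcongr
  · filter_upwards [ae_restrict_mem measurableSet_Ioi] with t (ht : 0 < t) w _
    have := ((hasDerivAt_id w).mul_const t |>.const_add (-t ^ 2 / 2)).exp.const_mul (t ^ q)
    refine this.congr_deriv ?_
    rw [rpow_add_one ht.ne', id]
    ring

lemma deriv_gaussMoment (hq : -1 < q) : deriv (gaussMoment q) = gaussMoment (q + 1) :=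
  funext fun z => (hasDerivAt_gaussMoment hq z).deriv

lemma iteratedDeriv_gaussMoment (hq : -1 < q) (n : ℕ) :
    iteratedDeriv n (gaussMoment q) = gaussMoment (q + n) := by
  induction n generalizing q with
  | zero => simp
  | succ n ih =>
    rw [iteratedDeriv_succ', deriv_gaussMoment hq, ih (by linarith)]
    push_cast
    ring_nf

lemma contDiff_gaussMoment (hq : -1 < q) {n : ℕ∞} : ContDiff ℝ n (gaussMoment q) :=
  contDiff_of_differentiable_iteratedDeriv fun m _ => by
    rw [iteratedDeriv_gaussMoment hq]
    have : -1 < q + m := by linarith [m.cast_nonneg (α := ℝ)]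
    exact fun z => (hasDerivAt_gaussMoment this z).differentiableAt

end gaussMoment

section gaussMomentAffine

variable {q A : ℝ} (mu : ℝ)

lemma hasDerivAt_gaussMoment_affine (hq : -1 < q) (x : ℝ) :
    HasDerivAt (fun x => gaussMoment q (A * (x - mu)))
      (A * gaussMoment (q + 1) (A * (x - mu))) x := by
  refine ((hasDerivAt_gaussMoment hq _).comp x
    (((hasDerivAt_id x).sub_const mu).const_mul A)).congr_deriv ?_
  rw [id, mul_one, mul_comm]

lemma deriv_gaussMoment_affine (hq : -1 < q) :
    deriv (fun x => gaussMoment q (A * (x - mu)))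
      = fun x => A * gaussMoment (q + 1) (A * (x - mu)) :=
  funext fun x => (hasDerivAt_gaussMoment_affine mu hq x).deriv

lemma contDiff_gaussMoment_affine (hq : -1 < q) {n : ℕ∞} :
    ContDiff ℝ n (fun x => gaussMoment q (A * (x - mu))) :=
  (contDiff_gaussMoment hq).comp (by fun_prop)

lemma deriv_gaussMoment_affine_pos (hq : -1 < q) (hA : 0 < A) (x : ℝ) :
    0 < deriv (fun x => gaussMoment q (A * (x - mu))) x := by
  rw [deriv_gaussMoment_affine mu hq]
  exact mul_pos hA (gaussMoment_pos (by linarith) _)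

lemma gaussMoment_affine_mul_deriv_deriv_pos (hq : -1 < q) (hA : 0 < A) (x : ℝ) :
    0 < gaussMoment q (A * (x - mu)) *
      deriv (deriv fun x => gaussMoment q (A * (x - mu))) x := by
  rw [deriv_gaussMoment_affine mu hq, deriv_const_mul_field',
    deriv_gaussMoment_affine mu (by linarith)]
  have := gaussMoment_pos hq (A * (x - mu))
  have := gaussMoment_pos (q := q + 1 + 1) (by linarith) (A * (x - mu))
  positivity

end gaussMomentAffine

lemma OUpsi_eq_gaussMoment (lam th mu sig : ℝ) :
    OUpsi lam th mu sig = fun x => gaussMoment (lam / th - 1) (√(2 * th) / sig * (x - mu)) := by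
  ext x
  simp only [OUpsi, gaussMoment, mul_right_comm _ _ (x - mu)]

noncomputable def newtonMap (f : ℝ → ℝ) (x : ℝ) : ℝ := x - f x / deriv f x

section newtonMap

variable {f : ℝ → ℝ} {x : ℝ}

lemma newtonMap_eq_iff (hf' : deriv f x ≠ 0) (b : ℝ) :
    newtonMap f x = b ↔ f x = deriv f x * (x - b) := by
  rw [newtonMap, sub_eq_iff_eq_add, ← sub_eq_iff_eq_add', eq_div_iff hf', mul_comm, eq_comm]

lemma contDiff_newtonMap (hf : ContDiff ℝ 2 f) (hf' : ∀ x, deriv f x ≠ 0) :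
    ContDiff ℝ 1 (newtonMap f) :=
  contDiff_id.sub ((hf.of_le one_le_two).div hf.deriv' hf')

lemma hasDerivAt_newtonMap (hf : ContDiff ℝ 2 f) (hf' : deriv f x ≠ 0) :
    HasDerivAt (newtonMap f) (f x * deriv (deriv f) x / deriv f x ^ 2) x := by
  have hd : HasDerivAt f (deriv f x) x :=
    ((hf.differentiable two_ne_zero) x).hasDerivAt
  have hd' : HasDerivAt (deriv f) (deriv (deriv f) x) x :=
    (hf.deriv'.differentiable one_ne_zero x).hasDerivAt
  refine ((hasDerivAt_id x).sub (hd.div hd' hf')).congr_deriv ?_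
  field_simp
  ring

lemma deriv_newtonMap_pos (hf : ContDiff ℝ 2 f) (hf' : deriv f x ≠ 0)
    (hff'' : 0 < f x * deriv (deriv f) x) : 0 < deriv (newtonMap f) x := by
  rw [(hasDerivAt_newtonMap hf hf').deriv]
  exact div_pos hff'' (pow_two_pos_of_ne_zero hf')

end newtonMap

section inverse

variable {h g : ℝ → ℝ} {s : Set ℝ}

lemma continuousOn_of_comp_of_strictMono (hh : Continuous h) (hmono : StrictMono h)
    (hg : ContinuousOn (h ∘ g) s) : ContinuousOn g s :=
  (hmono.isEmbedding_of_ordConnected (isPreconnected_range hh).ordConnected).continuousOn_iff.2 hg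

lemma contDiffOn_of_comp_of_strictMono {n : WithTop ℕ∞} (hn : n ≠ 0) (hh : ContDiff ℝ n h)
    (hmono : StrictMono h) (hh' : ∀ x, deriv h x ≠ 0) (hg : ContDiffOn ℝ n (h ∘ g) s) :
    ContDiffOn ℝ n g s := by
  intro c hc
  have hC : ContDiffAt ℝ n h (g c) := hh.contDiffAt
  have hF := ((hh.differentiable hn) (g c)).hasDerivAt.hasFDerivAt_equiv (hh' (g c))
  set L := hC.localInverse hF hn
  have hLh : ∀ᶠ y in 𝓝 (g c), L (h y) = y :=
    (hC.hasStrictFDerivAt' hF hn).eventually_left_inverse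
  have hcont : ContinuousWithinAt g s c :=
    continuousOn_of_comp_of_strictMono hh.continuous hmono hg.continuousOn c hc
  have hgL : g =ᶠ[𝓝[s] c] L ∘ (h ∘ g) :=
    (hcont.eventually hLh).mono fun _ hy => hy.symm
  exact ((hC.to_localInverse hF hn).comp_contDiffWithinAt c (hg c hc)).congr_of_eventuallyEq hgL
    (hC.localInverse_apply_image hF hn).symm

end inverse

lemma StrictConvexOn.add_deriv_mul_sub_lt {S : Set ℝ} {f : ℝ → ℝ} {x y : ℝ}
    (hf : StrictConvexOn ℝ S f) (hx : x ∈ S) (hy : y ∈ S) (hxy : x < y)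
    (hfd : DifferentiableAt ℝ f x) : f x + deriv f x * (y - x) < f y := by
  have h := hf.deriv_lt_slope hx hy hxy hfd
  rw [slope_def_field, lt_div_iff₀ (sub_pos.2 hxy)] at h
  linarith

section xbar0

variable {lam th mu : ℝ} {Phi : ℝ → ℝ}

lemma contDiffOn_xbar0fun {n : WithTop ℕ∞} {s : Set ℝ} (hPhi : ContDiff ℝ n Phi)
    (hzeta : ∀ c ∈ s, zetafun lam th Phi c ≠ 0) : ContDiffOn ℝ n (xbar0fun lam th mu Phi) s := by
  have hzetaC : ContDiff ℝ n (zetafun lam th Phi) :=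
    (contDiff_const.mul (contDiff_const.sub contDiff_id)).sub (contDiff_const.mul hPhi)
  exact (contDiff_const.mul hPhi).contDiffOn.div hzetaC.contDiffOn hzeta

lemma hasDerivAt_xbar0fun {c : ℝ} (hPhi : DifferentiableAt ℝ Phi c)
    (hzeta : zetafun lam th Phi c ≠ 0) :
    HasDerivAt (xbar0fun lam th mu Phi)
      (th * mu * (lam + th) * (Phi c + deriv Phi c * (1 - c)) / zetafun lam th Phi c ^ 2) c := by
  have hzeta' : HasDerivAt (zetafun lam th Phi) (-(lam + th) - lam * deriv Phi c) c := by
    refine ((((hasDerivAt_id c).const_sub 1).const_mul (lam + th)).sub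
      (hPhi.hasDerivAt.const_mul lam)).congr_deriv ?_
    ring
  refine ((hPhi.hasDerivAt.const_mul (th * mu)).div hzeta' hzeta).congr_deriv ?_
  rw [zetafun]
  ring

lemma strictAntiOn_xbar0fun (hlam : 0 < lam) (hth : 0 < th) (hmu : 0 < mu)
    (hPhi : ContDiff ℝ 1 Phi) (hconv : StrictConvexOn ℝ univ Phi) (hPhi1 : Phi 1 = 0)
    (hzeta : ∀ c ∈ Ico (0 : ℝ) 1, zetafun lam th Phi c ≠ 0) :
    StrictAntiOn (xbar0fun lam th mu Phi) (Ico 0 1) := by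
  refine strictAntiOn_of_deriv_neg (convex_Ico 0 1)
    (contDiffOn_xbar0fun hPhi hzeta).continuousOn fun c hc => ?_
  rw [interior_Ico] at hc
  have hd := hPhi.differentiable one_ne_zero c
  have hz := hzeta c (Ioo_subset_Ico_self hc)
  rw [(hasDerivAt_xbar0fun hd hz).deriv]
  have htangent := hconv.add_deriv_mul_sub_lt (mem_univ c) (mem_univ 1) hc.2 hd
  rw [hPhi1] at htangent
  exact div_neg_of_neg_of_pos (mul_neg_of_pos_of_neg (by positivity) htangent)
    (pow_two_pos_of_ne_zero hz)

end xbar0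

theorem statement14_general (lam th mu sig : ℝ)
    (hlam : 0 < lam) (hth : 0 < th) (hmu : 0 < mu) (hsig : 0 < sig)
    (Phi : ℝ → ℝ) (hPhiC2 : ContDiff ℝ 2 Phi)
    (hPhiconv : StrictConvexOn ℝ Set.univ Phi)
    (hPhi1 : Phi 1 = 0)
    (hzeta : ∀ c ∈ Set.Ico (0:ℝ) 1, zetafun lam th Phi c < 0)
    (gamma : ℝ → ℝ)
    (hgamma : ∀ c ∈ Set.Ico (0:ℝ) 1,
      OUpsi lam th mu sig (gamma c)
        = deriv (OUpsi lam th mu sig) (gamma c) * (gamma c - xbar0fun lam th mu Phi c) ∧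
      xbar0fun lam th mu Phi c < gamma c ∧
      ∀ y : ℝ, OUpsi lam th mu sig y
        = deriv (OUpsi lam th mu sig) y * (y - xbar0fun lam th mu Phi c) → y = gamma c)
    :
    StrictAntiOn (xbar0fun lam th mu Phi) (Set.Ico (0:ℝ) 1) ∧
    StrictAntiOn gamma (Set.Ico (0:ℝ) 1) ∧
    ContDiffOn ℝ 1 gamma (Set.Ico (0:ℝ) 1) := by
  have hq : -1 < lam / th - 1 := by linarith [div_pos hlam hth]
  have hA : 0 < √(2 * th) / sig := by positivity
  have hzeta' c hc : zetafun lam th Phi c ≠ 0 := (hzeta c hc).ne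
  rw [OUpsi_eq_gaussMoment] at hgamma
  set ψ := fun x => gaussMoment (lam / th - 1) (√(2 * th) / sig * (x - mu))
  have hψ : ContDiff ℝ 2 ψ := contDiff_gaussMoment_affine mu hq
  have hψ' x : deriv ψ x ≠ 0 := (deriv_gaussMoment_affine_pos mu hq hA x).ne'
  have hN' x : 0 < deriv (newtonMap ψ) x :=
    deriv_newtonMap_pos hψ (hψ' x) (gaussMoment_affine_mul_deriv_deriv_pos mu hq hA x)
  have hN : StrictMono (newtonMap ψ) := strictMono_of_deriv_pos hN'
  have hNγ : ∀ c ∈ Ico (0 : ℝ) 1, newtonMap ψ (gamma c) = xbar0fun lam th mu Phi c :=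
    fun c hc => (newtonMap_eq_iff (hψ' _) _).2 (hgamma c hc).1
  have hxbar :=
    strictAntiOn_xbar0fun hlam hth hmu (hPhiC2.of_le one_le_two) hPhiconv hPhi1 hzeta'
  refine ⟨hxbar, fun a ha b hb hab => ?_, contDiffOn_of_comp_of_strictMono one_ne_zero
    (contDiff_newtonMap hψ hψ') hN (fun x => (hN' x).ne')
    ((contDiffOn_xbar0fun (hPhiC2.of_le one_le_two) hzeta').congr hNγ)⟩
  rw [← hN.lt_iff_lt, hNγ a ha, hNγ b hb]
  exact hxbar ha hb hab

/-- assume `ζ < 0` on `[0,1)` and for each `c ∈ [0,1)` let `γ(c)` be the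
unique real solution of `ψ(x) = ψ'(x)(x - x̄₀(c))`, which lies in `(x̄₀(c), ∞)`. Then
`x̄₀` is strictly decreasing on `[0,1)`, and `γ` is strictly decreasing and continuously
differentiable on `[0,1)`. -/
theorem statement14 (lam th mu sig : ℝ)
    (hlam : 0 < lam) (hth : 0 < th) (hmu : 0 < mu) (hsig : 0 < sig)
    (Phi : ℝ → ℝ) (hPhiC2 : ContDiff ℝ 2 Phi)
    (hPhiconv : StrictConvexOn ℝ Set.univ Phi)
    (hPhi' : ∀ c ∈ Set.Icc (0:ℝ) 1, deriv Phi c < 0) (hPhi1 : Phi 1 = 0)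
    (hzeta : ∀ c ∈ Set.Ico (0:ℝ) 1, zetafun lam th Phi c < 0)
    (gamma : ℝ → ℝ)
    (hgamma : ∀ c ∈ Set.Ico (0:ℝ) 1,
      OUpsi lam th mu sig (gamma c)
        = deriv (OUpsi lam th mu sig) (gamma c) * (gamma c - xbar0fun lam th mu Phi c) ∧
      xbar0fun lam th mu Phi c < gamma c ∧
      ∀ y : ℝ, OUpsi lam th mu sig y
        = deriv (OUpsi lam th mu sig) y * (y - xbar0fun lam th mu Phi c) → y = gamma c)
    :
    StrictAntiOn (xbar0fun lam th mu Phi) (Set.Ico (0:ℝ) 1) ∧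
    StrictAntiOn gamma (Set.Ico (0:ℝ) 1) ∧
    ContDiffOn ℝ 1 gamma (Set.Ico (0:ℝ) 1) :=
  statement14_general lam th mu sig hlam hth hmu hsig Phi hPhiC2 hPhiconv hPhi1 hzeta gamma hgamma
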